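/- arXiv:1911.03616 — 2 statements merged into one kernel-verified Lean document; each statement's English description precedes it below -/
import Mathlib

section
/- Let F ⊆ ℝ² be a nonempty bounded open connected set and let ℓ ≥ 1 be an integer. For every polynomial p in two variables of total degree at most ℓ − 1 there exists a unique vector field v = (v₁, v₂) with v₁, v₂ ∈ P^ℓ(ℝ²) such that ∂₁v₁ + ∂₂v₂ = p (as functions on ℝ²) and ∫_F v · (vrot r) dx = 0 for every r ∈ P^{ℓ+1}(ℝ²). In other words, the two-dimensional divergence restricted to the L²(F)-orthogonal complement in P^ℓ(ℝ²)² of the space {vrot r : r ∈ P^{ℓ+1}(ℝ²)} is a linear isomorphism onto P^{ℓ−1}(ℝ²). -/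
open MvPolynomial MeasureTheory

/-- The two-dimensional vector curl `vrot r := (∂₂ r, −∂₁ r)` of a polynomial. -/
noncomputable def vrot2 (q : MvPolynomial (Fin 2) ℝ) : Fin 2 → MvPolynomial (Fin 2) ℝ :=
  ![pderiv 1 q, -pderiv 0 q]

/-!
Divergence maps `P^ℓ(ℝ²)²` onto `P^{ℓ-1}(ℝ²)`: integrate `p` in the first variable. Its kernel
in `P^ℓ(ℝ²)²` is exactly `vrot P^{ℓ+1}(ℝ²)`, because a divergence-free polynomial field has a
polynomial stream function, obtained by integrating twice. The `L²(F)` inner product is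
positive definite on polynomials, since a polynomial vanishing on the nonempty open set `F`
vanishes identically; so every field splits into a part in this finite-dimensional kernel and
a part orthogonal to it, and the divergence is injective on the orthogonal part.
-/

namespace MvPolynomial

variable {R σ : Type*}

theorem pderiv_pderiv_comm [CommRing R] (i j : σ) (f : MvPolynomial σ R) :
    pderiv i (pderiv j f) = pderiv j (pderiv i f) := by
  classical
  have : ⁅pderiv i, pderiv j⁆ = (0 : Derivation R (MvPolynomial σ R) (MvPolynomial σ R)) :=
    derivation_ext fun k => by
      rw [Derivation.commutator_apply, pderiv_X, pderiv_X, Pi.single_apply, Pi.single_apply]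
      split_ifs <;> simp
  simpa [Derivation.commutator_apply, sub_eq_zero] using congr($this f)

theorem totalDegree_linearMap_le {τ : Type*} [CommSemiring R]
    (f : MvPolynomial σ R →ₗ[R] MvPolynomial τ R) {g : ℕ → ℕ} (hg : Monotone g)
    (hf : ∀ m a, (f (monomial m a)).totalDegree ≤ g m.degree) (q : MvPolynomial σ R) :
    (f q).totalDegree ≤ g q.totalDegree := by
  conv_lhs => rw [q.as_sum, map_sum]
  exact (totalDegree_finsetSum _ _).trans <|
    Finset.sup_le fun m hm => (hf m _).trans (hg (le_totalDegree hm))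

theorem totalDegree_pderiv_le [CommSemiring R] (i : σ) (f : MvPolynomial σ R) :
    (pderiv i f).totalDegree ≤ f.totalDegree - 1 := by
  refine totalDegree_linearMap_le (pderiv i).toLinearMap (fun _ _ h => Nat.sub_le_sub_right h 1)
    (fun m a => ?_) f
  rw [Derivation.coeFn_coe, pderiv_monomial]
  rcases eq_or_ne (m i) 0 with hmi | hmi
  · simp [hmi]
  have hm : m - Finsupp.single i 1 + Finsupp.single i 1 = m :=
    tsub_add_cancel_of_le (Finsupp.single_le_iff.mpr (Nat.one_le_iff_ne_zero.mpr hmi))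
  refine (totalDegree_monomial_le _ _).trans_eq ?_
  show _ = Finsupp.degree m - 1
  conv_rhs => rw [← hm, map_add, Finsupp.degree_single]
  rfl

section Antideriv

variable {K : Type*} [Field K]

/-- The antiderivative in the variable `i` vanishing on the hyperplane `x i = 0`. -/
noncomputable def antideriv (i : σ) : MvPolynomial σ K →ₗ[K] MvPolynomial σ K :=
  (basisMonomials σ K).constr K fun m => monomial (m + Finsupp.single i 1) (m i + 1 : K)⁻¹

theorem antideriv_monomial (i : σ) (m : σ →₀ ℕ) (a : K) :
    antideriv i (monomial m a) = monomial (m + Finsupp.single i 1) (a / (m i + 1)) := by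
  have : monomial m a = a • basisMonomials σ K m := by simp [coe_basisMonomials, smul_monomial]
  rw [this, map_smul, antideriv, Module.Basis.constr_basis, smul_monomial, smul_eq_mul,
    div_eq_mul_inv]

theorem pderiv_antideriv [CharZero K] (i : σ) (f : MvPolynomial σ K) :
    pderiv i (antideriv i f) = f := by
  induction f using induction_on' with
  | monomial m a =>
    rw [antideriv_monomial, pderiv_monomial, add_tsub_cancel_right]
    simp only [Finsupp.add_apply, Finsupp.single_eq_same, Nat.cast_add, Nat.cast_one]
    rw [div_mul_cancel₀ _ (Nat.cast_add_one_ne_zero _)]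
  | add f g hf hg => simp only [map_add, hf, hg]

theorem pderiv_antideriv_of_ne {i j : σ} (h : i ≠ j) (f : MvPolynomial σ K) :
    pderiv j (antideriv i f) = antideriv i (pderiv j f) := by
  classical
  induction f using induction_on' with
  | monomial m a =>
    rw [antideriv_monomial, pderiv_monomial, pderiv_monomial, antideriv_monomial]
    congr 2
    · ext k
      simp only [Finsupp.coe_add, Finsupp.coe_tsub, Pi.add_apply, Pi.sub_apply,
        Finsupp.single_apply]
      split_ifs <;> subst_vars <;> simp_all
    · simp [h, h.symm]
      ring
  | add f g hf hg => simp only [map_add, hf, hg]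

theorem totalDegree_antideriv_le (i : σ) (f : MvPolynomial σ K) :
    (antideriv i f).totalDegree ≤ f.totalDegree + 1 := by
  refine totalDegree_linearMap_le _ (fun _ _ h => Nat.add_le_add_right h 1) (fun m a => ?_) f
  rw [antideriv_monomial]
  refine (totalDegree_monomial_le _ _).trans_eq ?_
  show Finsupp.degree (m + Finsupp.single i 1) = _
  rw [map_add, Finsupp.degree_single]

end Antideriv

section Analysis

variable [Fintype σ]

theorem eq_zero_of_eqOn_zero_of_isOpen {𝕜 : Type*} [RCLike 𝕜] {q : MvPolynomial σ 𝕜}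
    {F : Set (σ → 𝕜)} (hopen : IsOpen F) (hne : F.Nonempty) (h : Set.EqOn (eval · q) 0 F) :
    q = 0 := by
  obtain ⟨x₀, hx₀⟩ := hne
  have hzero := (AnalyticOnNhd.eval_mvPolynomial q).eqOn_zero_of_preconnected_of_eventuallyEq_zero
    isPreconnected_univ (Set.mem_univ x₀) (Filter.eventuallyEq_of_mem (hopen.mem_nhds hx₀) h)
  exact funext fun x => by simpa using hzero (Set.mem_univ x)

variable (μ : Measure (σ → ℝ)) [IsFiniteMeasureOnCompacts μ] {F : Set (σ → ℝ)}

theorem integrableOn_eval (q : MvPolynomial σ ℝ) (hF : Bornology.IsBounded F) :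
    IntegrableOn (eval · q) F μ :=
  (continuous_eval q).continuousOn.integrableOn_compact hF.isCompact_closure
    |>.mono_set subset_closure

noncomputable def setIntegralEval (hF : Bornology.IsBounded F) :
    MvPolynomial σ ℝ →ₗ[ℝ] ℝ where
  toFun q := ∫ x in F, eval x q ∂μ
  map_add' p q := by
    simp only [map_add]
    exact integral_add (integrableOn_eval μ p hF) (integrableOn_eval μ q hF)
  map_smul' c q := by simp [smul_eq_C_mul, integral_const_mul]

end Analysis

end MvPolynomial

instance Submodule.finite_pi_univ {R ι : Type*} [Ring R] [Finite ι] [DecidableEq ι]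
    {M : ι → Type*} [∀ i, AddCommGroup (M i)] [∀ i, Module R (M i)]
    (p : ∀ i, Submodule R (M i)) [∀ i, Module.Finite R (p i)] :
    Module.Finite R (Submodule.pi Set.univ p) := by
  rw [← Submodule.iSup_map_single]
  infer_instance

namespace LinearMap.BilinForm

variable {K V W : Type*} [Field K] [AddCommGroup V] [Module K V] [AddCommGroup W] [Module K W]

theorem exists_sub_mem_orthogonal {B : LinearMap.BilinForm K V} {N : Submodule K V}
    [FiniteDimensional K N] (hN : ∀ n ∈ N, B n n = 0 → n = 0) (u : V) :
    ∃ n ∈ N, u - n ∈ B.orthogonal N := by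
  have hnd : (B.restrict N).flip.Nondegenerate := by
    refine ⟨fun n hn => ?_, fun n hn => ?_⟩ <;>
      exact Subtype.ext (hN n n.2 (by simpa using hn n))
  obtain ⟨n, hn⟩ : ∃ n : N, ∀ m : N, B m n = B m u :=
    ⟨((B.restrict N).flip.toDual hnd).symm ((B.flip u).domRestrict N),
      apply_toDual_symm_apply (hB := hnd) _⟩
  exact ⟨n, n.2, fun m hm => show B m (u - n) = 0 by rw [map_sub, hn ⟨m, hm⟩, sub_self]⟩

theorem existsUnique_mem_orthogonal_inf_ker {B : LinearMap.BilinForm K V} {U : Submodule K V}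
    [FiniteDimensional K U] {D : V →ₗ[K] W} (hB : ∀ v ∈ U ⊓ LinearMap.ker D, B v v = 0 → v = 0)
    {u : V} (hu : u ∈ U) :
    ∃! v, v ∈ U ∧ D v = D u ∧ v ∈ B.orthogonal (U ⊓ LinearMap.ker D) := by
  obtain ⟨n, ⟨hnU, hnD⟩, horth⟩ := exists_sub_mem_orthogonal hB u
  refine ⟨u - n, ⟨sub_mem hu hnU, by simp [LinearMap.mem_ker.mp hnD], horth⟩, ?_⟩
  rintro w ⟨hwU, hwD, hworth⟩
  have hd : w - (u - n) ∈ U ⊓ LinearMap.ker D :=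
    ⟨sub_mem hwU (sub_mem hu hnU), by simp [hwD, LinearMap.mem_ker.mp hnD]⟩
  exact sub_eq_zero.mp (hB _ hd (sub_mem hworth horth _ hd))

end LinearMap.BilinForm

section L2Form

variable {ι σ : Type*} [Fintype ι] [Fintype σ] (μ : Measure (σ → ℝ)) [IsFiniteMeasureOnCompacts μ]
  {F : Set (σ → ℝ)} (hF : Bornology.IsBounded F)

noncomputable def l2Form : LinearMap.BilinForm ℝ (ι → MvPolynomial σ ℝ) :=
  (dotProductBilin ℝ ℝ).compr₂ (setIntegralEval μ hF)

theorem l2Form_apply (u w : ι → MvPolynomial σ ℝ) :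
    l2Form μ hF u w = ∫ x in F, ∑ i, eval x (u i) * eval x (w i) ∂μ := by
  change ∫ x in F, eval x (u ⬝ᵥ w) ∂μ = _
  simp only [dotProduct, map_sum, map_mul]

theorem eq_zero_of_l2Form_self_eq_zero [μ.IsOpenPosMeasure] (hopen : IsOpen F) (hne : F.Nonempty)
    {v : ι → MvPolynomial σ ℝ} (hv : l2Form μ hF v v = 0) : v = 0 := by
  have hnonneg : ∀ x, 0 ≤ eval x (v ⬝ᵥ v) := fun x => by
    simpa [dotProduct] using Finset.sum_nonneg fun i _ => mul_self_nonneg (eval x (v i))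
  change ∫ x in F, eval x (v ⬝ᵥ v) ∂μ = 0 at hv
  rw [setIntegral_eq_zero_iff_of_nonneg_ae (.of_forall hnonneg) (integrableOn_eval μ _ hF)] at hv
  have hzero := Measure.eqOn_open_of_ae_eq hv hopen (continuous_eval _).continuousOn
    continuousOn_const
  funext i
  refine eq_zero_of_eqOn_zero_of_isOpen hopen hne fun x hx => ?_
  have hsum : ∑ i, eval x (v i) * eval x (v i) = 0 := by simpa [dotProduct] using hzero hx
  simpa using (Finset.sum_eq_zero_iff_of_nonneg fun i _ => mul_self_nonneg _).mp hsum i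
    (Finset.mem_univ i)

end L2Form

section Plane

local notation "P₂" => MvPolynomial (Fin 2) ℝ

noncomputable def div2 : (Fin 2 → P₂) →ₗ[ℝ] P₂ :=
  (pderiv 0).toLinearMap ∘ₗ LinearMap.proj 0 + (pderiv 1).toLinearMap ∘ₗ LinearMap.proj 1

theorem div2_apply (v : Fin 2 → P₂) : div2 v = pderiv 0 (v 0) + pderiv 1 (v 1) := rfl

/-- `P^ℓ(ℝ²)²`. -/
noncomputable abbrev vecRestrictTotalDegree (ℓ : ℕ) : Submodule ℝ (Fin 2 → P₂) :=
  Submodule.pi Set.univ fun _ => restrictTotalDegree (Fin 2) ℝ ℓ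

theorem mem_vecRestrictTotalDegree {ℓ : ℕ} {v : Fin 2 → P₂} :
    v ∈ vecRestrictTotalDegree ℓ ↔ ∀ i, (v i).totalDegree ≤ ℓ := by
  simp [vecRestrictTotalDegree, Submodule.mem_pi, mem_restrictTotalDegree]

theorem div2_vrot2 (r : P₂) : div2 (vrot2 r) = 0 := by
  simp only [div2_apply, vrot2, Matrix.cons_val_zero, Matrix.cons_val_one, map_neg]
  rw [pderiv_pderiv_comm, add_neg_cancel]

theorem vrot2_mem_vecRestrictTotalDegree {ℓ : ℕ} {r : P₂} (hr : r.totalDegree ≤ ℓ + 1) :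
    vrot2 r ∈ vecRestrictTotalDegree ℓ := by
  rw [mem_vecRestrictTotalDegree]
  intro i
  fin_cases i
  · exact (totalDegree_pderiv_le 1 r).trans (by omega)
  · simpa [vrot2, totalDegree_neg] using (totalDegree_pderiv_le 0 r).trans (by omega)

theorem exists_vrot2_eq {ℓ : ℕ} {v : Fin 2 → P₂} (hv : v ∈ vecRestrictTotalDegree ℓ)
    (hdiv : div2 v = 0) : ∃ r : P₂, r.totalDegree ≤ ℓ + 1 ∧ vrot2 r = v := by
  rw [mem_vecRestrictTotalDegree] at hv
  rw [div2_apply] at hdiv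
  set a := antideriv 1 (v 0)
  set c := pderiv 0 a + v 1
  have ha : pderiv 1 a = v 0 := pderiv_antideriv 1 (v 0)
  have ha_deg : a.totalDegree ≤ ℓ + 1 :=
    (totalDegree_antideriv_le 1 (v 0)).trans (Nat.add_le_add_right (hv 0) 1)
  -- `c` does not depend on `x 1`, so subtracting its antiderivative in `x 0` keeps `∂₁ = v 0`.
  have hc : pderiv 1 c = 0 := by rw [map_add, pderiv_pderiv_comm, ha, hdiv]
  have hc_deg : c.totalDegree ≤ ℓ :=
    (totalDegree_add _ _).trans (max_le ((totalDegree_pderiv_le 0 a).trans (by omega)) (hv 1))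
  refine ⟨a - antideriv 0 c, ?_, ?_⟩
  · exact (totalDegree_sub _ _).trans
      (max_le ha_deg ((totalDegree_antideriv_le 0 c).trans (by omega)))
  · ext i : 1
    fin_cases i
    · simp [vrot2, ha, pderiv_antideriv_of_ne, hc]
    · simp [vrot2, c, pderiv_antideriv]

theorem exists_div2_eq {ℓ : ℕ} (hℓ : 1 ≤ ℓ) {p : P₂} (hp : p.totalDegree ≤ ℓ - 1) :
    ∃ u ∈ vecRestrictTotalDegree ℓ, div2 u = p := by
  refine ⟨![antideriv 0 p, 0], ?_, by simp [div2_apply, pderiv_antideriv]⟩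
  rw [mem_vecRestrictTotalDegree]
  intro i
  fin_cases i
  · exact (totalDegree_antideriv_le 0 p).trans (by omega)
  · simp

theorem mem_orthogonal_inf_ker_div2_iff {B : LinearMap.BilinForm ℝ (Fin 2 → P₂)} {ℓ : ℕ}
    {v : Fin 2 → P₂} :
    v ∈ B.orthogonal (vecRestrictTotalDegree ℓ ⊓ LinearMap.ker div2) ↔
      ∀ r : P₂, r.totalDegree ≤ ℓ + 1 → B (vrot2 r) v = 0 := by
  refine ⟨fun h r hr => h _ ⟨vrot2_mem_vecRestrictTotalDegree hr, div2_vrot2 r⟩,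
    fun h w ⟨hwU, hwD⟩ => ?_⟩
  obtain ⟨r, hr, rfl⟩ := exists_vrot2_eq hwU hwD
  exact h r hr

end Plane

theorem div2_iso_vrot_orthogonal_complement_general (F : Set (Fin 2 → ℝ)) (hne : F.Nonempty)
    (hopen : IsOpen F) (hbdd : Bornology.IsBounded F)
    (ℓ : ℕ) (hℓ : 1 ≤ ℓ)
    (p : MvPolynomial (Fin 2) ℝ) (hp : p.totalDegree ≤ ℓ - 1) :
    ∃! v : Fin 2 → MvPolynomial (Fin 2) ℝ,
      (∀ i, (v i).totalDegree ≤ ℓ) ∧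
      (∀ x : Fin 2 → ℝ, eval x (pderiv 0 (v 0)) + eval x (pderiv 1 (v 1)) = eval x p) ∧
      (∀ r : MvPolynomial (Fin 2) ℝ, r.totalDegree ≤ ℓ + 1 →
        (∫ x in F, ∑ i, eval x (v i) * eval x (vrot2 r i)) = 0) := by
  obtain ⟨u, hu, rfl⟩ := exists_div2_eq hℓ hp
  have hunique := LinearMap.BilinForm.existsUnique_mem_orthogonal_inf_ker (B := l2Form volume hbdd)
    (D := div2) (fun v _ => eq_zero_of_l2Form_self_eq_zero volume hbdd hopen hne) hu
  refine (existsUnique_congr fun v => ?_).mp hunique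
  simp only [mem_vecRestrictTotalDegree, mem_orthogonal_inf_ker_div2_iff, l2Form_apply,
    MvPolynomial.funext_iff, div2_apply, map_add, mul_comm]

/-- On a nonempty bounded open connected `F ⊆ ℝ²` and for `ℓ ≥ 1`, for every
polynomial `p` of total degree `≤ ℓ − 1` there is a unique polynomial vector field
`v ∈ P^ℓ(ℝ²)²` such that `∂₁v₁ + ∂₂v₂ = p` as functions on `ℝ²` and `v` is
`L²(F)`-orthogonal to `vrot r` for every `r ∈ P^{ℓ+1}(ℝ²)`. -/
theorem div2_iso_vrot_orthogonal_complement (F : Set (Fin 2 → ℝ)) (hne : F.Nonempty)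
    (hopen : IsOpen F) (hbdd : Bornology.IsBounded F) (hconn : IsConnected F)
    (ℓ : ℕ) (hℓ : 1 ≤ ℓ)
    (p : MvPolynomial (Fin 2) ℝ) (hp : p.totalDegree ≤ ℓ - 1) :
    ∃! v : Fin 2 → MvPolynomial (Fin 2) ℝ,
      (∀ i, (v i).totalDegree ≤ ℓ) ∧
      (∀ x : Fin 2 → ℝ, eval x (pderiv 0 (v 0)) + eval x (pderiv 1 (v 1)) = eval x p) ∧
      (∀ r : MvPolynomial (Fin 2) ℝ, r.totalDegree ≤ ℓ + 1 →
        (∫ x in F, ∑ i, eval x (v i) * eval x (vrot2 r i)) = 0) :=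
  div2_iso_vrot_orthogonal_complement_general F hne hopen hbdd ℓ hℓ p hp
end

section
/- Let ℓ ≥ 0 be an integer and let v ∈ P^ℓ(ℝ³)³ be a polynomial vector field such that curl v = 0 identically on ℝ³. Then there exists a polynomial q ∈ P^{ℓ+1}(ℝ³) such that grad q = v. (Exactness at the curl stage of the polynomial de Rham sequence: every curl-free polynomial vector field of degree at most ℓ is the gradient of a polynomial of degree at most ℓ + 1.) -/
/-!
Writing `p = ∑ i, Xᵢ vᵢ`, the symmetry `∂ᵢ vⱼ = ∂ⱼ vᵢ` of the Jacobian (which is what `curl v = 0`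
says) gives `∂ⱼ p = vⱼ + E vⱼ`, where `E = ∑ i, Xᵢ ∂ᵢ` is the Euler operator, acting on the
monomial `X^m` as multiplication by `|m|`. The potential is `q = ∫₀¹ p(t x) dt / t`, i.e. `p` with
the coefficient of `X^m` divided by `|m|`. Then `∂ⱼ q` has the coefficients of `∂ⱼ p` divided by
`|m| + 1`, which is exactly `vⱼ`.
-/

open MvPolynomial

/-- The curl of a polynomial vector field on `ℝ³`, as a polynomial vector field. -/
noncomputable def pcurl3 (w : Fin 3 → MvPolynomial (Fin 3) ℝ) : Fin 3 → MvPolynomial (Fin 3) ℝ :=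
  ![pderiv 1 (w 2) - pderiv 2 (w 1),
    pderiv 2 (w 0) - pderiv 0 (w 2),
    pderiv 0 (w 1) - pderiv 1 (w 0)]

namespace MvPolynomial

section Euler

variable {σ R : Type*} [Fintype σ] [CommSemiring R]

theorem sum_X_mul_pderiv_monomial (m : σ →₀ ℕ) (r : R) :
    ∑ i, X i * pderiv i (monomial m r) = m.degree • monomial m r := by
  simp only [X_mul_pderiv_monomial, ← Finset.sum_smul, Finsupp.degree_eq_sum]

theorem coeff_sum_X_mul_pderiv (f : MvPolynomial σ R) (m : σ →₀ ℕ) :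
    coeff m (∑ i, X i * pderiv i f) = m.degree * coeff m f := by
  classical
  induction f using MvPolynomial.induction_on' with
  | monomial n r =>
    rw [sum_X_mul_pderiv_monomial, coeff_smul, coeff_monomial, nsmul_eq_mul]
    split_ifs with h
    · rw [h]
    · simp
  | add f g hf hg =>
    simp only [map_add, mul_add, Finset.sum_add_distrib, coeff_add, hf, hg]

theorem pderiv_sum_X_mul_of_pderiv_comm {v : σ → MvPolynomial σ R}
    (hv : ∀ i j, pderiv i (v j) = pderiv j (v i)) (j : σ) :
    pderiv j (∑ i, X i * v i) = v j + ∑ i, X i * pderiv i (v j) := by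
  classical
  simp only [map_sum, pderiv_mul, pderiv_X, Finset.sum_add_distrib, hv j]
  simp [Pi.single_apply]

theorem totalDegree_sum_X_mul_le [Nontrivial R] {v : σ → MvPolynomial σ R} {ℓ : ℕ}
    (hv : ∀ i, (v i).totalDegree ≤ ℓ) : (∑ i, X i * v i).totalDegree ≤ ℓ + 1 := by
  refine (totalDegree_finsetSum _ _).trans (Finset.sup_le fun i _ => ?_)
  calc (X i * v i).totalDegree ≤ (X i : MvPolynomial σ R).totalDegree + (v i).totalDegree :=
        totalDegree_mul _ _
    _ ≤ 1 + ℓ := add_le_add (totalDegree_X i).le (hv i)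
    _ = ℓ + 1 := add_comm 1 ℓ

end Euler

section DivDegree

variable {σ K : Type*} [Field K]

/-- The inverse of the Euler operator on polynomials without constant term; the constant coefficient
is sent to `0` (division by `0`). -/
noncomputable def divDegree (f : MvPolynomial σ K) : MvPolynomial σ K :=
  ∑ m ∈ f.support, monomial m (coeff m f / m.degree)

theorem coeff_divDegree (f : MvPolynomial σ K) (m : σ →₀ ℕ) :
    coeff m (divDegree f) = coeff m f / m.degree := by
  classical
  rw [divDegree, coeff_sum]
  simp only [coeff_monomial, Finset.sum_ite_eq', mem_support_iff, ite_not]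
  split_ifs with h <;> simp [h]

theorem totalDegree_divDegree_le (f : MvPolynomial σ K) :
    (divDegree f).totalDegree ≤ f.totalDegree := by
  refine totalDegree_le_of_support_subset fun m hm => ?_
  rw [mem_support_iff, coeff_divDegree] at hm
  exact mem_support_iff.mpr fun h => hm (by rw [h, zero_div])

theorem coeff_pderiv_divDegree (f : MvPolynomial σ K) (j : σ) (m : σ →₀ ℕ) :
    coeff m (pderiv j (divDegree f)) = coeff m (pderiv j f) / (m.degree + 1) := by
  rw [coeff_pderiv, coeff_divDegree, coeff_pderiv, map_add, Finsupp.degree_single]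
  push_cast
  ring

theorem pderiv_divDegree_sum_X_mul [Fintype σ] [CharZero K] {v : σ → MvPolynomial σ K}
    (hv : ∀ i j, pderiv i (v j) = pderiv j (v i)) (j : σ) :
    pderiv j (divDegree (∑ i, X i * v i)) = v j := by
  ext m
  rw [coeff_pderiv_divDegree, pderiv_sum_X_mul_of_pderiv_comm hv, coeff_add,
    coeff_sum_X_mul_pderiv, div_eq_iff (Nat.cast_add_one_ne_zero _)]
  ring

end DivDegree

end MvPolynomial

theorem pderiv_comm_of_pcurl3_eq_zero {v : Fin 3 → MvPolynomial (Fin 3) ℝ} (h : pcurl3 v = 0)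
    (i j : Fin 3) : pderiv i (v j) = pderiv j (v i) := by
  have h0 := congrFun h 0
  have h1 := congrFun h 1
  have h2 := congrFun h 2
  simp only [pcurl3, Matrix.cons_val, Pi.zero_apply, sub_eq_zero] at h0 h1 h2
  fin_cases i <;> fin_cases j <;> simp [h0, h1, h2]

/-- Every curl-free polynomial vector field of degree at most `ℓ` on `ℝ³`
is the gradient of a polynomial of degree at most `ℓ + 1`. -/
theorem exists_potential_of_curl_free (ℓ : ℕ) (v : Fin 3 → MvPolynomial (Fin 3) ℝ)
    (hv : ∀ i, (v i).totalDegree ≤ ℓ)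
    (hcurl : ∀ (x : Fin 3 → ℝ) (i : Fin 3), eval x (pcurl3 v i) = 0) :
    ∃ q : MvPolynomial (Fin 3) ℝ, q.totalDegree ≤ ℓ + 1 ∧
      ∀ (x : Fin 3 → ℝ) (i : Fin 3), eval x (pderiv i q) = eval x (v i) := by
  have hcurl_eq_zero : pcurl3 v = 0 :=
    funext fun i => MvPolynomial.funext fun x => by rw [hcurl x i, Pi.zero_apply, map_zero]
  refine ⟨divDegree (∑ i, X i * v i),
    (totalDegree_divDegree_le _).trans (totalDegree_sum_X_mul_le hv), fun x i => ?_⟩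
  rw [pderiv_divDegree_sum_X_mul (pderiv_comm_of_pcurl3_eq_zero hcurl_eq_zero)]
end
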